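/- arXiv:1507.05184 — 3 statements merged into one kernel-verified Lean document; each statement's English description precedes it below -/
import Mathlib

section
/- For each n ≥ 2, the number of derangements of {1,...,n} with exactly one descent is 2^{n-2}. -/
open Polynomial Finset

/-- Values of a permutation of `Fin n` as a function `ℕ → ℕ` (0-indexed). -/
def permVal {n : ℕ} (π : Equiv.Perm (Fin n)) (i : ℕ) : ℕ :=
  if h : i < n then (π ⟨i, h⟩ : ℕ) else 0

/-- Number of descents of a permutation. -/
def desNum {n : ℕ} (π : Equiv.Perm (Fin n)) : ℕ :=
  ((Finset.range (n - 1)).filter (fun i => permVal π (i + 1) < permVal π i)).card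

/-- `π` contains the pattern given by the word `σ`. -/
def ContainsPat {n k : ℕ} (π : Equiv.Perm (Fin n)) (σ : Fin k → ℕ) : Prop :=
  ∃ f : Fin k → Fin n, (∀ i j : Fin k, i < j → f i < f j) ∧
    ∀ i j : Fin k, σ i < σ j ↔ π (f i) < π (f j)

/-- A separable permutation avoids both 2413 and 3142. -/
def SepPerm {n : ℕ} (π : Equiv.Perm (Fin n)) : Prop :=
  ¬ ContainsPat π ![2, 4, 1, 3] ∧ ¬ ContainsPat π ![3, 1, 4, 2]

open scoped Classical in
/-- Descent polynomial of separable permutations. -/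
noncomputable def sepPoly (n : ℕ) : Polynomial ℤ :=
  ∑ π ∈ Finset.univ.filter (fun π : Equiv.Perm (Fin n) => SepPerm π), X ^ desNum π


/-- Descent polynomial of derangements. -/
noncomputable def derPoly (n : ℕ) : Polynomial ℤ :=
  ∑ π ∈ Finset.univ.filter (fun π : Equiv.Perm (Fin n) => ∀ i, π i ≠ i), X ^ desNum π

/-- Number of derangements of `{1,...,n}` with exactly `k` descents. -/
def derDesCount (n k : ℕ) : ℕ :=
  (Finset.univ.filter
    (fun π : Equiv.Perm (Fin n) => (∀ i, π i ≠ i) ∧ desNum π = k)).card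

/-!
A permutation with at most one descent is determined by the set `s` of values in its first
increasing run: it lists `s` increasingly and then `sᶜ` increasingly. Such a permutation is
fixed-point free exactly when `0 ∉ s` and the largest value lies in `s`: then each value in `s`
is preceded by fewer values than lie below it (`0` is not among them), and each value in `sᶜ`
by more (the largest value is). It then has exactly one descent, just before the value `0`, so
`s` is recovered as the set of values preceding `0`. Thus derangements with one descent
correspond to the subsets of `{1, …, n - 2}`.
-/

open Equiv

section RunPerm

variable {n : ℕ} (s : Finset (Fin n))

def runKey (v : Fin n) : Bool ×ₗ Fin n := toLex (decide (v ∉ s), v)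

variable {s}

lemma runKey_lt_runKey_iff {a b : Fin n} :
    runKey s a < runKey s b ↔ a ∈ s ∧ b ∉ s ∨ (a ∈ s ↔ b ∈ s) ∧ a < b := by
  by_cases ha : a ∈ s <;> by_cases hb : b ∈ s <;> simp [runKey, Prod.Lex.toLex_lt_toLex, ha, hb]

lemma runKey_injective : Function.Injective (runKey s) := fun _ _ h =>
  congrArg (fun k => (ofLex k).2) h

variable (s) in
/-- The permutation listing the elements of `s` in increasing order, followed by those of `sᶜ`
in increasing order. -/
def runPerm : Perm (Fin n) := Tuple.sort (runKey s)

lemma eq_runPerm_iff {σ : Perm (Fin n)} : σ = runPerm s ↔ StrictMono (runKey s ∘ σ) := by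
  rw [runPerm, Tuple.eq_sort_iff]
  refine ⟨fun h => h.1.strictMono_of_injective (runKey_injective.comp σ.injective),
    fun h => ⟨h.monotone, fun i j hij hkey => ?_⟩⟩
  exact absurd (σ.injective (runKey_injective hkey)) hij.ne

variable (s) in
lemma strictMono_runKey_comp_runPerm : StrictMono (runKey s ∘ runPerm s) :=
  eq_runPerm_iff.1 rfl

lemma runPerm_symm_lt_symm_iff {a b : Fin n} :
    (runPerm s).symm a < (runPerm s).symm b ↔ runKey s a < runKey s b := by
  have h := (strictMono_runKey_comp_runPerm s).lt_iff_lt (a := (runPerm s).symm a)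
    (b := (runPerm s).symm b)
  simpa using h.symm

lemma runPerm_symm_eq_card (v : Fin n) :
    ((runPerm s).symm v : ℕ) = #{w | runKey s w < runKey s v} := by
  rw [← Fin.card_Iio]
  exact (card_equiv (runPerm s).symm fun w => by simp [runPerm_symm_lt_symm_iff]).symm

end RunPerm

section Derangement

variable {N : ℕ} {s : Finset (Fin (N + 1))}

lemma runPerm_zero_of_mem (h0 : 0 ∈ s) : runPerm s 0 = 0 := by
  rw [← Equiv.eq_symm_apply, eq_comm, ← Fin.val_eq_zero_iff, runPerm_symm_eq_card,
    card_eq_zero, filter_eq_empty_iff]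
  intro w _
  simp [runKey_lt_runKey_iff, h0]

lemma runPerm_last_of_notMem (hN : Fin.last N ∉ s) : runPerm s (Fin.last N) = Fin.last N := by
  rw [← Equiv.eq_symm_apply, eq_comm, Fin.ext_iff, runPerm_symm_eq_card, Fin.val_last]
  have hbelow : ({w | runKey s w < runKey s (Fin.last N)} : Finset _) =
      univ.erase (Fin.last N) := by
    ext w
    have hs : w ∈ s → w < Fin.last N := fun hw =>
      Fin.lt_last_iff_ne_last.2 (ne_of_mem_of_not_mem hw hN)
    simp only [mem_filter, mem_univ, true_and, mem_erase, and_true, runKey_lt_runKey_iff,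
      ← Fin.lt_last_iff_ne_last]
    tauto
  simp [hbelow]

lemma runPerm_symm_lt_self (h0 : 0 ∉ s) {v : Fin (N + 1)} (hv : v ∈ s) :
    (runPerm s).symm v < v := by
  rw [Fin.lt_def, runPerm_symm_eq_card, ← Fin.card_Iio]
  refine card_lt_card ((ssubset_iff_of_subset fun w hw => ?_).mpr ⟨0, ?_, ?_⟩)
  · grind [runKey_lt_runKey_iff]
  · exact mem_Iio.mpr (Fin.pos_iff_ne_zero.mpr (ne_of_mem_of_not_mem hv h0))
  · simp [runKey_lt_runKey_iff, h0, hv]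

lemma lt_runPerm_symm_self (hN : Fin.last N ∈ s) {v : Fin (N + 1)} (hv : v ∉ s) :
    v < (runPerm s).symm v := by
  rw [Fin.lt_def, runPerm_symm_eq_card, ← Fin.card_Iio]
  refine card_lt_card ((ssubset_iff_of_subset fun w hw => ?_).mpr ⟨Fin.last N, ?_, ?_⟩)
  · by_cases hw' : w ∈ s <;> simp_all [runKey_lt_runKey_iff]
  · simp [runKey_lt_runKey_iff, hN, hv]
  · simp [Fin.le_last]

lemma runPerm_fixedPointFree_iff :
    (∀ i, runPerm s i ≠ i) ↔ 0 ∉ s ∧ Fin.last N ∈ s := by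
  refine ⟨fun h => ⟨fun h0 => h 0 (runPerm_zero_of_mem h0),
    not_not.mp fun hN => h _ (runPerm_last_of_notMem hN)⟩, fun ⟨h0, hN⟩ i hi => ?_⟩
  have hsymm : (runPerm s).symm i = i := by rw [← hi, Equiv.symm_apply_apply, hi]
  by_cases hs : i ∈ s
  · exact (runPerm_symm_lt_self h0 hs).ne hsymm
  · exact (lt_runPerm_symm_self hN hs).ne' hsymm

end Derangement

section Descents

variable {N : ℕ}

def descents (π : Perm (Fin (N + 1))) : Finset (Fin N) := {i | π i.succ < π i.castSucc}

lemma desNum_eq_card_descents (π : Perm (Fin (N + 1))) : desNum π = #(descents π) := by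
  rw [desNum, descents, card_filter, card_filter, Nat.add_sub_cancel,
    ← Fin.sum_univ_eq_sum_range]
  refine sum_congr rfl fun i _ => ?_
  rw [permVal, permVal, dif_pos (by omega), dif_pos (by omega)]
  rfl

lemma exists_mem_descents_succ_eq_symm_zero {π : Perm (Fin (N + 1))} (hπ : ∀ i, π i ≠ i) :
    ∃ q ∈ descents π, q.succ = π.symm 0 := by
  obtain ⟨q, hq⟩ := Fin.exists_succ_eq.2 fun h => hπ 0 (π.symm_apply_eq.1 h).symm
  refine ⟨q, ?_, hq⟩
  have hq0 : π q.succ = 0 := by rw [hq, Equiv.apply_symm_apply]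
  rw [descents, mem_filter, hq0, Fin.pos_iff_ne_zero, ← hq0]
  exact ⟨mem_univ _, π.injective.ne (Fin.castSucc_lt_succ (i := q)).ne⟩

lemma mem_of_mem_descents_runPerm {s : Finset (Fin (N + 1))} {i : Fin N}
    (hi : i ∈ descents (runPerm s)) : runPerm s i.castSucc ∈ s ∧ runPerm s i.succ ∉ s := by
  have hkey := (strictMono_runKey_comp_runPerm s).lt_iff_lt.2 (Fin.castSucc_lt_succ (i := i))
  rw [descents, mem_filter] at hi
  simp only [Function.comp, runKey_lt_runKey_iff] at hkey
  exact hkey.resolve_right fun h => hi.2.not_gt h.2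

lemma card_descents_runPerm_le_one (s : Finset (Fin (N + 1))) :
    #(descents (runPerm s)) ≤ 1 := by
  have key : ∀ i ∈ descents (runPerm s), ∀ j ∈ descents (runPerm s), ¬ i < j := by
    intro i hi j hj hij
    have hle := (strictMono_runKey_comp_runPerm s).monotone (Fin.succ_le_castSucc_iff.2 hij)
    simp only [Function.comp] at hle
    exact hle.not_gt (runKey_lt_runKey_iff.2
      (.inl ⟨(mem_of_mem_descents_runPerm hj).1, (mem_of_mem_descents_runPerm hi).2⟩))
  exact card_le_one.2 fun i hi j hj =>
    le_antisymm (not_lt.1 (key j hj i hi)) (not_lt.1 (key i hi j hj))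

end Descents

section Bijection

variable {N : ℕ}

def valuesBefore {n : ℕ} (π : Perm (Fin n)) (v : Fin n) : Finset (Fin n) :=
  {w | π.symm w < π.symm v}

lemma valuesBefore_runPerm_zero {s : Finset (Fin (N + 1))} (h0 : 0 ∉ s) :
    valuesBefore (runPerm s) 0 = s := by
  ext v
  simp [valuesBefore, runPerm_symm_lt_symm_iff, runKey_lt_runKey_iff, h0]

lemma runPerm_valuesBefore_zero {π : Perm (Fin (N + 1))} (hπ : ∀ i, π i ≠ i)
    (hdes : #(descents π) = 1) : runPerm (valuesBefore π 0) = π := by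
  obtain ⟨q, hq, hqp⟩ := exists_mem_descents_succ_eq_symm_zero hπ
  obtain ⟨d, hd⟩ := card_eq_one.1 hdes
  rw [hd, mem_singleton] at hq
  subst hq
  -- the only descent `q` sits just before the value `0`, so the first run is `valuesBefore π 0`
  have hmem : ∀ j, π j ∈ valuesBefore π 0 ↔ j < q.succ := by simp [valuesBefore, hqp]
  refine (eq_runPerm_iff.2 (Fin.strictMono_iff_lt_succ.2 fun i => ?_)).symm
  simp only [Function.comp, runKey_lt_runKey_iff, hmem]
  rcases eq_or_ne i q with rfl | hiq
  · exact .inl ⟨Fin.castSucc_lt_succ, lt_irrefl _⟩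
  · have hi : i ∉ descents π := by rw [hd, mem_singleton]; exact hiq
    rw [descents, mem_filter, not_and, not_lt] at hi
    refine .inr ⟨?_, (hi (mem_univ _)).lt_of_ne (π.injective.ne Fin.castSucc_lt_succ.ne)⟩
    rw [Fin.castSucc_lt_succ_iff, Fin.succ_lt_succ_iff]
    exact ⟨fun h => h.lt_of_ne hiq, le_of_lt⟩

lemma card_descents_runPerm {s : Finset (Fin (N + 1))} (hs : ∀ i, runPerm s i ≠ i) :
    #(descents (runPerm s)) = 1 := by
  obtain ⟨q, hq, -⟩ := exists_mem_descents_succ_eq_symm_zero hs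
  exact (card_descents_runPerm_le_one s).antisymm (card_pos.2 ⟨q, hq⟩)

end Bijection

lemma card_filter_notMem_and_mem {α : Type*} [Fintype α] [DecidableEq α] {a b : α}
    (hab : a ≠ b) : #{s : Finset α | a ∉ s ∧ b ∈ s} = 2 ^ (Fintype.card α - 2) := by
  rw [show Fintype.card α - 2 = #({a, b}ᶜ : Finset α) by rw [card_compl, card_pair hab],
    ← card_powerset]
  refine card_bij' (fun s _ => s.erase b) (fun t _ => insert b t) (fun s hs => ?_)
    (fun t ht => ?_) (fun s hs => ?_) (fun t ht => ?_) <;>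
    simp only [mem_filter, mem_univ, true_and, mem_powerset] at *
  · intro w hw
    rw [mem_erase] at hw
    simp only [mem_compl, mem_insert, mem_singleton, not_or]
    exact ⟨ne_of_mem_of_not_mem hw.2 hs.1, hw.1⟩
  · rw [mem_insert, not_or]
    exact ⟨⟨hab, fun ha => by simpa using ht ha⟩, mem_insert_self b t⟩
  · exact insert_erase hs.2
  · exact erase_insert fun hb => by simpa using ht hb

theorem derDesCount_one_descent (n : ℕ) (hn : 2 ≤ n) :
    derDesCount n 1 = 2 ^ (n - 2) := by
  obtain ⟨N, rfl⟩ : ∃ N, n = N + 1 := ⟨n - 1, by omega⟩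
  have h0N : (0 : Fin (N + 1)) ≠ Fin.last N := by
    rw [Ne, Fin.ext_iff, Fin.val_zero, Fin.val_last]; omega
  have hcount := card_filter_notMem_and_mem h0N
  rw [Fintype.card_fin] at hcount
  rw [derDesCount, ← hcount]
  refine card_bij' (fun π _ => valuesBefore π 0) (fun s _ => runPerm s) (fun π hπ => ?_)
    (fun s hs => ?_) (fun π hπ => ?_) (fun s hs => ?_) <;>
    simp only [mem_filter, mem_univ, true_and, desNum_eq_card_descents] at *
  · rw [← runPerm_fixedPointFree_iff, runPerm_valuesBefore_zero hπ.1 hπ.2]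
    exact hπ.1
  · have hfree := runPerm_fixedPointFree_iff.2 hs
    exact ⟨hfree, card_descents_runPerm hfree⟩
  · exact runPerm_valuesBefore_zero hπ.1 hπ.2
  · exact valuesBefore_runPerm_zero hs.1
end

section
/- For each n ≥ 1, the descent polynomial D_{2n}(t) of derangements of even length 2n is a monic polynomial of degree 2n-1, while D_{2n+1}(t) has degree 2n-1 (strictly less than 2n). -/
open Polynomial Finset

/-!
A permutation of `Fin m` has at most `m - 1` descents, with equality exactly for the
reversal `i ↦ m - 1 - i`, which is a derangement iff `m` is even. The coefficients of
`derPoly m` count permutations, so nothing cancels: `derPoly (2 * n)` has the single top term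
`X ^ (2 * n - 1)`, and `derPoly (2 * n + 1)` has degree at most `2 * n - 1`. That degree is
attained by the reversal with the entries at positions `n, n + 1` swapped,
`2n, …, n + 1, n - 1, n, n - 2, …, 0`, a derangement whose only ascent is at `n`.
-/

section SumXPow

variable {R ι : Type*} [Semiring R] (s : Finset ι) (f : ι → ℕ)

theorem coeff_sum_X_pow (k : ℕ) :
    (∑ i ∈ s, (X : R[X]) ^ f i).coeff k = #{i ∈ s | f i = k} := by
  simp [coeff_X_pow, eq_comm]

theorem natDegree_sum_X_pow_le {d : ℕ} (hle : ∀ i ∈ s, f i ≤ d) :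
    (∑ i ∈ s, (X : R[X]) ^ f i).natDegree ≤ d :=
  natDegree_sum_le_of_forall_le _ _ fun i hi => (natDegree_X_pow_le _).trans (hle i hi)

theorem natDegree_sum_X_pow_eq [CharZero R] {d : ℕ} (hle : ∀ i ∈ s, f i ≤ d)
    (hex : ∃ i ∈ s, f i = d) : (∑ i ∈ s, (X : R[X]) ^ f i).natDegree = d := by
  classical
  refine natDegree_eq_of_le_of_coeff_ne_zero (natDegree_sum_X_pow_le s f hle) ?_
  rw [coeff_sum_X_pow, Nat.cast_ne_zero, ← pos_iff_ne_zero, card_pos]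
  obtain ⟨i, hi, hfi⟩ := hex
  exact ⟨i, mem_filter.mpr ⟨hi, hfi⟩⟩

theorem monic_sum_X_pow {d : ℕ} {i₀ : ι} (hle : ∀ i ∈ s, f i ≤ d)
    (htop : {i ∈ s | f i = d} = {i₀}) : (∑ i ∈ s, (X : R[X]) ^ f i).Monic :=
  monic_of_natDegree_le_of_coeff_eq_one d (natDegree_sum_X_pow_le s f hle) <| by
    rw [coeff_sum_X_pow, htop, card_singleton, Nat.cast_one]

end SumXPow

theorem permVal_of_lt {m : ℕ} (π : Equiv.Perm (Fin m)) {i : ℕ} (h : i < m) :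
    permVal π i = π ⟨i, h⟩ :=
  dif_pos h

theorem desNum_le {m : ℕ} (π : Equiv.Perm (Fin m)) : desNum π ≤ m - 1 :=
  (card_filter_le _ _).trans (card_range _).le

theorem Equiv.Perm.strictAnti_iff_eq_revPerm {m : ℕ} {π : Equiv.Perm (Fin m)} :
    StrictAnti π ↔ π = Fin.revPerm := by
  refine ⟨fun h => ?_, fun h => h ▸ Fin.rev_strictAnti⟩
  have hid : π ∘ Fin.rev = id := (h.comp Fin.rev_strictAnti).eq_id
  refine Equiv.ext fun i => ?_
  simpa using congrFun hid i.rev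

theorem desNum_eq_sub_one_iff {m : ℕ} (π : Equiv.Perm (Fin m)) :
    desNum π = m - 1 ↔ π = Fin.revPerm := by
  rw [← Equiv.Perm.strictAnti_iff_eq_revPerm]
  cases m with
  | zero => simp [desNum, Subsingleton.strictAnti]
  | succ k =>
    have hcard : desNum π = k ↔ ∀ i ∈ range k, permVal π (i + 1) < permVal π i := by
      rw [← card_filter_eq_iff, card_range, desNum, Nat.add_sub_cancel]
    rw [Fin.strictAnti_iff_succ_lt, Nat.add_sub_cancel, hcard]
    simp only [Fin.forall_iff, mem_range]
    refine forall_congr' fun i => forall_congr' fun hi => ?_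
    rw [permVal_of_lt π (Nat.succ_lt_succ hi), permVal_of_lt π (Nat.lt_succ_of_lt hi)]
    rfl

theorem revPerm_apply_ne_self_of_even {m : ℕ} (hm : Even m) (i : Fin m) :
    Fin.revPerm i ≠ i := by
  obtain ⟨k, rfl⟩ := hm
  simp only [Fin.revPerm_apply, ne_eq, Fin.ext_iff, Fin.val_rev]
  omega

theorem revPerm_apply_middle {n : ℕ} :
    Fin.revPerm (⟨n, by omega⟩ : Fin (2 * n + 1)) = ⟨n, by omega⟩ := by
  simp only [Fin.revPerm_apply, Fin.ext_iff, Fin.val_rev]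
  omega

section RevAscentAt

variable {k : ℕ} (i : Fin k)

def revAscentAt : Equiv.Perm (Fin (k + 1)) :=
  Fin.revPerm * Equiv.swap i.castSucc i.succ

theorem val_revAscentAt (j : Fin (k + 1)) :
    (revAscentAt i j : ℕ) =
      k - if (j : ℕ) = i then (i : ℕ) + 1
        else if (j : ℕ) = (i : ℕ) + 1 then (i : ℕ) else j := by
  simp only [revAscentAt, Equiv.Perm.mul_apply, Fin.revPerm_apply, Fin.val_rev,
    Equiv.swap_apply_def, Fin.ext_iff, apply_ite Fin.val, Fin.val_castSucc, Fin.val_succ]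
  split_ifs <;> omega

theorem desNum_revAscentAt : desNum (revAscentAt i) = k - 1 := by
  have hdes : {j ∈ range k | permVal (revAscentAt i) (j + 1) < permVal (revAscentAt i) j} =
      (range k).erase i := by
    ext j
    simp only [mem_filter, mem_erase, mem_range]
    by_cases hj : j < k
    · rw [permVal_of_lt _ (Nat.succ_lt_succ hj), permVal_of_lt _ (Nat.lt_succ_of_lt hj),
        val_revAscentAt, val_revAscentAt]
      simp only
      split_ifs <;> omega
    · tauto
  rw [desNum, Nat.add_sub_cancel, hdes, card_erase_of_mem (mem_range.mpr i.isLt), card_range]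

end RevAscentAt

theorem revAscentAt_middle_apply_ne_self {n : ℕ} (hn : 1 ≤ n) (j : Fin (2 * n + 1)) :
    revAscentAt (⟨n, by omega⟩ : Fin (2 * n)) j ≠ j := by
  rw [Ne, Fin.ext_iff, val_revAscentAt]
  simp only
  split_ifs <;> omega

theorem desNum_le_of_forall_apply_ne_self {n : ℕ} {π : Equiv.Perm (Fin (2 * n + 1))}
    (hπ : ∀ i, π i ≠ i) : desNum π ≤ 2 * n - 1 := by
  have hne : desNum π ≠ 2 * n := fun h =>
    hπ _ (((desNum_eq_sub_one_iff π).mp h) ▸ revPerm_apply_middle)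
  have := desNum_le π
  omega

theorem filter_desNum_eq_sub_one_of_even {m : ℕ} (hm : Even m) :
    {π ∈ univ.filter (fun π : Equiv.Perm (Fin m) => ∀ i, π i ≠ i) | desNum π = m - 1} =
      {Fin.revPerm} := by
  ext π
  simp only [mem_filter, mem_univ, true_and, mem_singleton, desNum_eq_sub_one_iff]
  exact ⟨And.right, fun h => ⟨h ▸ revPerm_apply_ne_self_of_even hm, h⟩⟩

theorem derPoly_degree (n : ℕ) (hn : 1 ≤ n) :
    (derPoly (2 * n)).Monic ∧ (derPoly (2 * n)).natDegree = 2 * n - 1 ∧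
    (derPoly (2 * n + 1)).natDegree = 2 * n - 1 := by
  have heven : Even (2 * n) := even_two_mul n
  have hmax : ∀ π ∈ univ.filter (fun π : Equiv.Perm (Fin (2 * n)) => ∀ i, π i ≠ i),
      desNum π ≤ 2 * n - 1 := fun π _ => desNum_le π
  refine ⟨monic_sum_X_pow _ _ hmax (filter_desNum_eq_sub_one_of_even heven),
    natDegree_sum_X_pow_eq _ _ hmax ⟨Fin.revPerm, ?_, (desNum_eq_sub_one_iff _).mpr rfl⟩,
    natDegree_sum_X_pow_eq _ _
      (fun π hπ => desNum_le_of_forall_apply_ne_self (mem_filter.mp hπ).2)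
      ⟨revAscentAt ⟨n, by omega⟩, ?_, desNum_revAscentAt _⟩⟩
  · exact mem_filter.mpr ⟨mem_univ _, revPerm_apply_ne_self_of_even heven⟩
  · exact mem_filter.mpr ⟨mem_univ _, revAscentAt_middle_apply_ne_self hn⟩
end

section
/- The descent polynomials of separable permutations satisfy, for n ≥ 2, the recurrence S_n(t) = (1+t) S_{n-1}(t) + t Σ_{j=1}^{n-2} S_j(t) ( S_{n-j-1}(t) + Σ_{i=1}^{n-j-1} S_i(t) S_{n-j-i}(t) ), with S_1(t) = 1. -/
/-!
A separable permutation of size at least two is a direct sum or a skew sum, never both: growing a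
prefix one position at a time, a cut can only be lost by creating a 3142 or a 2413. Splitting off
the first sum-indecomposable block gives `S = A + A S` for the generating functions in `z` over
`ℤ[t]`, with `A` counting the sum-indecomposable separable permutations. The complement
`π ↦ n - 1 - π` exchanges direct and skew sums and descents with ascents, and a skew sum has one
extra descent at the junction, so the same splitting gives `S = B + t B S` for the
skew-indecomposable ones, while `A + B = z + S`. Eliminating `A` and `B` leaves
`S = z + (1 + t) z S + t S (z S + S²)`, whose coefficient of `zⁿ` is the recurrence.
-/

open Polynomial Finset

section PermVal

variable {n : ℕ}

lemma permVal_val (π : Equiv.Perm (Fin n)) (i : Fin n) : permVal π i = π i := by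
  simp [permVal]

lemma permVal_lt (π : Equiv.Perm (Fin n)) {i : ℕ} (hi : i < n) : permVal π i < n := by
  simp [permVal, hi]

lemma permVal_injOn (π : Equiv.Perm (Fin n)) : Set.InjOn (permVal π) (Set.Iio n) := by
  intro i hi j hj h
  simp only [Set.mem_Iio] at hi hj
  simpa [permVal, hi, hj, Fin.val_inj] using h

lemma permVal_inj (π : Equiv.Perm (Fin n)) {i j : ℕ} (hi : i < n) (hj : j < n) :
    permVal π i = permVal π j ↔ i = j :=
  (permVal_injOn π).eq_iff hi hj

lemma Equiv.Perm.ext_permVal {π ρ : Equiv.Perm (Fin n)}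
    (h : ∀ i < n, permVal π i = permVal ρ i) : π = ρ := by
  ext x
  simpa [permVal] using h x x.isLt

lemma exists_perm_permVal_eq (f : ℕ → ℕ) (hf : ∀ i < n, f i < n)
    (hinj : Set.InjOn f (Set.Iio n)) :
    ∃ π : Equiv.Perm (Fin n), ∀ i < n, permVal π i = f i := by
  let g : Fin n → Fin n := fun i => ⟨f i, hf i i.isLt⟩
  have hg : Function.Injective g := fun i j h =>
    Fin.ext (hinj i.isLt j.isLt (congrArg Fin.val h))
  exact ⟨Equiv.ofBijective g (Finite.injective_iff_bijective.mp hg), fun i hi => by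
    simp [permVal, hi, g]⟩

lemma containsPat_iff_permVal {k : ℕ} (π : Equiv.Perm (Fin n)) (σ : Fin k → ℕ) :
    ContainsPat π σ ↔ ∃ g : Fin k → ℕ, (∀ i, g i < n) ∧ StrictMono g ∧
      ∀ i j, σ i < σ j ↔ permVal π (g i) < permVal π (g j) := by
  constructor
  · rintro ⟨f, hmono, hpat⟩
    exact ⟨fun i => f i, fun i => (f i).isLt, fun i j hij => hmono i j hij,
      fun i j => by simp only [hpat i j, permVal_val, Fin.val_fin_lt]⟩
  · rintro ⟨g, hlt, hmono, hpat⟩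
    refine ⟨fun i => ⟨g i, hlt i⟩, fun i j hij => hmono hij, fun i j => ?_⟩
    simp [hpat i j, permVal, hlt]

lemma not_containsPat_of_lt {k : ℕ} (π : Equiv.Perm (Fin n)) (σ : Fin k → ℕ) (h : n < k) :
    ¬ ContainsPat π σ := by
  rintro ⟨f, hmono, -⟩
  have := Fintype.card_le_of_injective f (StrictMono.injective fun i j hij => hmono i j hij)
  simp only [Fintype.card_fin] at this
  omega

lemma sepPerm_of_lt_four (π : Equiv.Perm (Fin n)) (h : n < 4) : SepPerm π :=
  ⟨not_containsPat_of_lt π _ h, not_containsPat_of_lt π _ h⟩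

lemma desNum_eq_sum (π : Equiv.Perm (Fin n)) :
    desNum π = ∑ i ∈ range (n - 1), if permVal π (i + 1) < permVal π i then 1 else 0 :=
  card_filter _ _

end PermVal

section Complement

variable {n : ℕ}

def Equiv.Perm.complement (π : Equiv.Perm (Fin n)) : Equiv.Perm (Fin n) :=
  π.trans Fin.revPerm

lemma permVal_complement (π : Equiv.Perm (Fin n)) {i : ℕ} (hi : i < n) :
    permVal π.complement i = n - 1 - permVal π i := by
  simp [permVal, hi, Equiv.Perm.complement, Fin.val_rev]
  omega

lemma Equiv.Perm.complement_involutive : Function.Involutive (@complement n) := by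
  intro π
  ext i
  simp [complement]

lemma desNum_complement_add_desNum (π : Equiv.Perm (Fin n)) :
    desNum π.complement + desNum π = n - 1 := by
  rw [desNum_eq_sum, desNum_eq_sum, ← sum_add_distrib]
  calc _ = ∑ i ∈ range (n - 1), 1 := sum_congr rfl fun i hi => ?_
    _ = n - 1 := by simp
  have hi : i + 1 < n := by rw [mem_range] at hi; omega
  have hne := (permVal_inj π hi (by omega : i < n)).not.mpr (by omega)
  have := permVal_lt π hi
  have := permVal_lt π (by omega : i < n)
  rw [permVal_complement π hi, permVal_complement π (by omega)]
  split_ifs <;> omega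

lemma containsPat_complement_iff {k : ℕ} (π : Equiv.Perm (Fin n)) {σ τ : Fin k → ℕ}
    (hστ : ∀ i j, σ i < σ j ↔ τ j < τ i) :
    ContainsPat π.complement σ ↔ ContainsPat π τ := by
  simp only [containsPat_iff_permVal]
  refine exists_congr fun g => and_congr_right fun hg => and_congr_right fun _ => ?_
  rw [forall_comm]
  refine forall_congr' fun j => forall_congr' fun i => ?_
  have := permVal_lt π (hg i)
  have := permVal_lt π (hg j)
  rw [hστ, permVal_complement π (hg i), permVal_complement π (hg j)]
  omega

lemma sepPerm_complement_iff (π : Equiv.Perm (Fin n)) : SepPerm π.complement ↔ SepPerm π := by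
  rw [SepPerm, SepPerm, containsPat_complement_iff π (τ := ![3, 1, 4, 2]) (by decide),
    containsPat_complement_iff π (τ := ![2, 4, 1, 3]) (by decide), and_comm]

end Complement

section Decomposition

variable {n : ℕ}

def IsSumCut (π : Equiv.Perm (Fin n)) (m k : ℕ) : Prop :=
  ∀ i j, i < k → k ≤ j → j < m → permVal π i < permVal π j

def SumIndecomposable (π : Equiv.Perm (Fin n)) : Prop :=
  ∀ k, 0 < k → k < n → ¬ IsSumCut π n k

lemma containsPat_3142 {π : Equiv.Perm (Fin n)} {p q r s : ℕ} (hpq : p < q) (hqr : q < r)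
    (hrs : r < s) (hs : s < n) (hqs : permVal π q < permVal π s)
    (hsp : permVal π s < permVal π p) (hpr : permVal π p < permVal π r) :
    ContainsPat π ![3, 1, 4, 2] := by
  rw [containsPat_iff_permVal]
  refine ⟨![p, q, r, s], fun i => ?_, Fin.strictMono_iff_lt_succ.mpr fun i => ?_,
    fun i j => ?_⟩
  · fin_cases i <;> simp <;> omega
  · fin_cases i <;> simp <;> omega
  · fin_cases i <;> fin_cases j <;> simp <;> omega

lemma lt_permVal_between_of_sepPerm {π : Equiv.Perm (Fin n)} (hsep : SepPerm π) {m k k' j : ℕ}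
    (hm : m < n) (hkm : k < m) (hcut : IsSumCut π m k) (hk' : permVal π m < permVal π k')
    (hj : k' ≤ j) (hjk : j < k) : permVal π m < permVal π j := by
  rcases hj.eq_or_lt with rfl | hj
  · exact hk'
  by_contra hle
  have hne := (permVal_inj π (by omega : j < n) hm).not.mpr (by omega)
  exact hsep.2 (containsPat_3142 hj hjk hkm hm (by omega) hk'
    (hcut k' k (by omega) le_rfl hkm))

lemma isSumCut_succ_of_first_above {π : Equiv.Perm (Fin n)} (hsep : SepPerm π) {m k k' : ℕ}
    (hm : m < n) (hkm : k < m) (hcut : IsSumCut π m k) (hk'k : k' < k)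
    (hk' : permVal π m < permVal π k') (hbelow : ∀ i < k', permVal π i < permVal π m) :
    IsSumCut π (m + 1) k' := by
  intro i j hi hj hjm
  rcases Nat.lt_or_ge j k with hjk | hjk
  · exact (hbelow i hi).trans (lt_permVal_between_of_sepPerm hsep hm hkm hcut hk' hj hjk)
  rcases (Nat.lt_succ_iff.mp hjm).lt_or_eq with hjm | rfl
  · exact hcut i j (by omega) hjk hjm
  · exact hbelow i hi

/-- Extending a cut of the first `m` positions to the first `m + 1`: either the old cut survives,
the new value is below everything (a skew cut at `m`), or the cut moves left to the first
position whose value exceeds the new one. -/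
lemma exists_isSumCut_succ {π : Equiv.Perm (Fin n)} (hsep : SepPerm π) {m k : ℕ} (hm : m < n)
    (hk : 0 < k) (hkm : k < m) (hcut : IsSumCut π m k) :
    ∃ k', 0 < k' ∧ k' < m + 1 ∧
      (IsSumCut π (m + 1) k' ∨ IsSumCut π.complement (m + 1) k') := by
  have hne : ∀ i < m, permVal π i ≠ permVal π m := fun i hi =>
    (permVal_inj π (by omega) hm).not.mpr (by omega)
  by_cases hext : ∀ i < k, permVal π i < permVal π m
  · refine ⟨k, hk, by omega, Or.inl fun i j hi hj hjm => ?_⟩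
    rcases (Nat.lt_succ_iff.mp hjm).lt_or_eq with hjm | rfl
    · exact hcut i j hi hj hjm
    · exact hext i hi
  push Not at hext
  obtain ⟨i₀, hi₀, hi₀m⟩ := hext
  replace hi₀m := lt_of_le_of_ne hi₀m (hne i₀ (by omega)).symm
  have hright : ∀ j, k ≤ j → j < m → permVal π m < permVal π j := fun j hj hjm =>
    hi₀m.trans (hcut i₀ j hi₀ hj hjm)
  by_cases hlow : ∃ p < k, permVal π p < permVal π m
  · obtain ⟨p, hpk, hp⟩ := hlow
    have hex : ∃ i, permVal π m < permVal π i := ⟨i₀, hi₀m⟩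
    have hk'i₀ : Nat.find hex ≤ i₀ := Nat.find_min' hex hi₀m
    have hbelow : ∀ i < Nat.find hex, permVal π i < permVal π m := fun i hi =>
      lt_of_le_of_ne (not_lt.mp (Nat.find_min hex hi)) (hne i (by omega))
    have hpos : 0 < Nat.find hex := by
      by_contra h0
      exact not_lt.mpr hp.le (lt_permVal_between_of_sepPerm hsep hm hkm hcut (Nat.find_spec hex)
        (by omega) hpk)
    exact ⟨Nat.find hex, hpos, by omega, Or.inl (isSumCut_succ_of_first_above hsep hm hkm hcut
      (by omega) (Nat.find_spec hex) hbelow)⟩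
  · push Not at hlow
    refine ⟨m, by omega, by omega, Or.inr fun i j hi hj hjm => ?_⟩
    obtain rfl : j = m := by omega
    rw [permVal_complement π (by omega), permVal_complement π hm]
    have := permVal_lt π (by omega : i < n)
    rcases Nat.lt_or_ge i k with hik | hik
    · have := lt_of_le_of_ne (hlow i hik) (hne i hi).symm
      omega
    · have := hright i hik hi
      omega

lemma exists_isSumCut_prefix {m : ℕ} (hm : 2 ≤ m) (hmn : m ≤ n) (π : Equiv.Perm (Fin n))
    (hsep : SepPerm π) :
    ∃ k, 0 < k ∧ k < m ∧ (IsSumCut π m k ∨ IsSumCut π.complement m k) := by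
  induction m, hm using Nat.le_induction generalizing π with
  | base =>
    have h01 : ∀ i j, i < 1 → 1 ≤ j → j < 2 → i = 0 ∧ j = 1 := by omega
    have hne := (permVal_inj π (by omega : 0 < n) (by omega : 1 < n)).not.mpr (by omega)
    refine ⟨1, by omega, by omega, ?_⟩
    rcases Nat.lt_or_gt_of_ne hne with h | h
    · exact Or.inl fun i j hi hj hj2 => by obtain ⟨rfl, rfl⟩ := h01 i j hi hj hj2; exact h
    · refine Or.inr fun i j hi hj hj2 => ?_
      obtain ⟨rfl, rfl⟩ := h01 i j hi hj hj2
      rw [permVal_complement π (by omega), permVal_complement π (by omega)]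
      have := permVal_lt π (by omega : 0 < n)
      omega
  | succ m hm ih =>
    obtain ⟨k, hk, hkm, hcut | hcut⟩ := ih (by omega) π hsep
    · exact exists_isSumCut_succ hsep (by omega) hk hkm hcut
    · obtain ⟨k', hk', hk'm, h | h⟩ :=
        exists_isSumCut_succ ((sepPerm_complement_iff π).mpr hsep) (by omega) hk hkm hcut
      · exact ⟨k', hk', hk'm, Or.inr h⟩
      · rw [Equiv.Perm.complement_involutive] at h
        exact ⟨k', hk', hk'm, Or.inl h⟩

lemma not_isSumCut_complement {π : Equiv.Perm (Fin n)} {k l : ℕ} (hk : 0 < k) (hkn : k < n)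
    (hl : 0 < l) (hln : l < n) (h : IsSumCut π n k) : ¬ IsSumCut π.complement n l := by
  intro hc
  have h₁ := h 0 (n - 1) hk (by omega) (by omega)
  have h₂ := hc 0 (n - 1) hl (by omega) (by omega)
  rw [permVal_complement π (by omega), permVal_complement π (by omega)] at h₂
  have := permVal_lt π (by omega : n - 1 < n)
  omega

/-- `SumIndecomposable π.complement` says that `π` is not a skew sum: a separable permutation of
size at least two is a direct sum or a skew sum, never both. -/
lemma sumIndecomposable_complement_iff {π : Equiv.Perm (Fin n)} (hsep : SepPerm π)
    (hn : 2 ≤ n) : SumIndecomposable π.complement ↔ ¬ SumIndecomposable π := by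
  constructor
  · intro hc hi
    obtain ⟨k, hk, hkn, h | h⟩ := exists_isSumCut_prefix hn le_rfl π hsep
    exacts [hi k hk hkn h, hc k hk hkn h]
  · intro hni l hl hln hcl
    exact hni fun k hk hkn hck => not_isSumCut_complement hk hkn hl hln hck hcl

end Decomposition

section DirectSum

variable {a b n : ℕ}

def Equiv.Perm.directSum (h : a + b = n) (α : Equiv.Perm (Fin a)) (β : Equiv.Perm (Fin b)) :
    Equiv.Perm (Fin n) :=
  (finSumFinEquiv.trans (finCongr h)).permCongr (Equiv.Perm.sumCongr α β)

open Equiv.Perm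

variable (h : a + b = n) (α : Equiv.Perm (Fin a)) (β : Equiv.Perm (Fin b))

lemma permVal_directSum_left {i : ℕ} (hi : i < a) :
    permVal (directSum h α β) i = permVal α i := by
  have : (⟨i, by omega⟩ : Fin (a + b)) = Fin.castAdd b ⟨i, hi⟩ := rfl
  simp only [permVal, dif_pos hi, dif_pos (show i < n by omega), directSum,
    Equiv.permCongr_apply, Equiv.symm_trans_apply, finCongr_symm, finCongr_apply]
  rw [Fin.cast_mk, this, finSumFinEquiv_symm_apply_castAdd]
  simp

lemma permVal_directSum_right {i : ℕ} (hi : i < b) :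
    permVal (directSum h α β) (a + i) = a + permVal β i := by
  have : (⟨a + i, by omega⟩ : Fin (a + b)) = Fin.natAdd a ⟨i, hi⟩ := rfl
  simp only [permVal, dif_pos hi, dif_pos (show a + i < n by omega), directSum,
    Equiv.permCongr_apply, Equiv.symm_trans_apply, finCongr_symm, finCongr_apply]
  rw [Fin.cast_mk, this, finSumFinEquiv_symm_apply_natAdd]
  simp

lemma isSumCut_directSum : IsSumCut (directSum h α β) n a := by
  intro i j hi hj hjn
  obtain ⟨t, rfl⟩ := Nat.exists_eq_add_of_le hj
  rw [permVal_directSum_left h α β hi, permVal_directSum_right h α β (by omega)]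
  have := permVal_lt α hi
  omega

lemma isSumCut_directSum_iff {k : ℕ} (hk : k ≤ a) :
    IsSumCut (directSum h α β) n k ↔ IsSumCut α a k := by
  constructor
  · intro hc i j hi hj hja
    have := hc i j hi hj (by omega)
    rwa [permVal_directSum_left h α β (by omega : i < a), permVal_directSum_left h α β hja]
      at this
  · intro hc i j hi hj hjn
    rcases Nat.lt_or_ge j a with hja | hja
    · rw [permVal_directSum_left h α β (by omega), permVal_directSum_left h α β hja]
      exact hc i j hi hj hja
    · exact isSumCut_directSum h α β i j (by omega) hja hjn

lemma directSum_inj {α' : Equiv.Perm (Fin a)} {β' : Equiv.Perm (Fin b)}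
    (he : directSum h α β = directSum h α' β') : α = α' ∧ β = β' := by
  refine ⟨Equiv.Perm.ext_permVal fun i hi => ?_, Equiv.Perm.ext_permVal fun i hi => ?_⟩
  · rw [← permVal_directSum_left h α β hi, he, permVal_directSum_left h α' β' hi]
  · have := permVal_directSum_right h α β hi
    rw [he, permVal_directSum_right h α' β' hi] at this
    omega

lemma desNum_directSum (ha : 0 < a) (hb : 0 < b) :
    desNum (directSum h α β) = desNum α + desNum β := by
  have hn : n - 1 = (a - 1 + 1) + (b - 1) := by omega
  rw [desNum_eq_sum, hn, sum_range_add, sum_range_succ, desNum_eq_sum, desNum_eq_sum]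
  have hjoin :
      ¬ permVal (directSum h α β) (a - 1 + 1) < permVal (directSum h α β) (a - 1) := by
    rw [show a - 1 + 1 = a + 0 by omega, permVal_directSum_right h α β hb,
      permVal_directSum_left h α β (by omega)]
    have := permVal_lt α (by omega : a - 1 < a)
    omega
  rw [if_neg hjoin, add_zero]
  congr 1
  · refine sum_congr rfl fun i hi => ?_
    rw [mem_range] at hi
    rw [permVal_directSum_left h α β (by omega), permVal_directSum_left h α β (by omega)]
  · refine sum_congr rfl fun i hi => ?_
    rw [mem_range] at hi
    rw [show a - 1 + 1 + i + 1 = a + (i + 1) by omega, show a - 1 + 1 + i = a + i by omega,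
      permVal_directSum_right h α β (by omega), permVal_directSum_right h α β (by omega)]
    simp only [Nat.add_lt_add_iff_left]

lemma permVal_lt_of_isSumCut {π : Equiv.Perm (Fin n)} (hcut : IsSumCut π n a) (ha : a ≤ n)
    {i : ℕ} (hi : i < a) : permVal π i < a := by
  have hcard := card_le_card_of_injOn (s := Ico a n) (t := Ioo (permVal π i) n) (permVal π)
    (fun j hj => by
      rw [coe_Ico, Set.mem_Ico] at hj
      exact mem_Ioo.mpr ⟨hcut i j hi hj.1 hj.2, permVal_lt π hj.2⟩)
    ((permVal_injOn π).mono fun j hj => by simp only [coe_Ico, Set.mem_Ico] at hj; exact hj.2)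
  have := permVal_lt π (by omega : i < n)
  simp only [Nat.card_Ico, Nat.card_Ioo] at hcard
  omega

lemma le_permVal_of_isSumCut {π : Equiv.Perm (Fin n)} (hcut : IsSumCut π n a) {j : ℕ}
    (hj : a ≤ j) (hjn : j < n) : a ≤ permVal π j := by
  have hcard := card_le_card_of_injOn (s := range a) (t := range (permVal π j)) (permVal π)
    (fun i hi => by
      rw [coe_range, Set.mem_Iio] at hi
      exact mem_range.mpr (hcut i j hi hj hjn))
    ((permVal_injOn π).mono fun i hi => by simp only [coe_range, Set.mem_Iio] at hi ⊢; omega)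
  simpa only [card_range] using hcard

lemma exists_directSum_of_isSumCut {π : Equiv.Perm (Fin n)} (hcut : IsSumCut π n a) :
    ∃ (α : Equiv.Perm (Fin a)) (β : Equiv.Perm (Fin b)), π = directSum h α β := by
  have hhigh : ∀ i < b, a ≤ permVal π (a + i) := fun i hi =>
    le_permVal_of_isSumCut hcut (Nat.le_add_right a i) (by omega)
  obtain ⟨α, hα⟩ := exists_perm_permVal_eq (n := a) (permVal π)
    (fun i hi => permVal_lt_of_isSumCut hcut (by omega) hi)
    ((permVal_injOn π).mono fun i hi => by simp only [Set.mem_Iio] at hi ⊢; omega)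
  obtain ⟨β, hβ⟩ := exists_perm_permVal_eq (n := b) (fun i => permVal π (a + i) - a)
    (fun i hi => by have := permVal_lt π (by omega : a + i < n); omega)
    (fun i hi j hj hij => by
      simp only [Set.mem_Iio] at hi hj hij
      have := hhigh i hi
      have := hhigh j hj
      have := (permVal_inj π (by omega : a + i < n) (by omega : a + j < n)).mp (by omega)
      omega)
  refine ⟨α, β, Equiv.Perm.ext_permVal fun i hi => ?_⟩
  rcases Nat.lt_or_ge i a with hia | hia
  · rw [permVal_directSum_left h α β hia, hα i hia]
  · obtain ⟨t, rfl⟩ := Nat.exists_eq_add_of_le hia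
    rw [permVal_directSum_right h α β (by omega), hβ t (by omega)]
    have := hhigh t (by omega)
    omega

lemma containsPat_directSum_of_left {k : ℕ} {σ : Fin k → ℕ} (hα : ContainsPat α σ) :
    ContainsPat (directSum h α β) σ := by
  obtain ⟨g, hlt, hmono, hpat⟩ := (containsPat_iff_permVal α σ).mp hα
  refine (containsPat_iff_permVal _ σ).mpr ⟨g, fun i => by have := hlt i; omega, hmono,
    fun i j => ?_⟩
  rw [hpat, permVal_directSum_left h α β (hlt i), permVal_directSum_left h α β (hlt j)]

lemma containsPat_directSum_of_right {k : ℕ} {σ : Fin k → ℕ} (hβ : ContainsPat β σ) :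
    ContainsPat (directSum h α β) σ := by
  obtain ⟨g, hlt, hmono, hpat⟩ := (containsPat_iff_permVal β σ).mp hβ
  refine (containsPat_iff_permVal _ σ).mpr ⟨fun i => a + g i,
    fun i => show a + g i < n by have := hlt i; omega,
    fun i j hij => Nat.add_lt_add_left (hmono hij) a, fun i j => ?_⟩
  rw [hpat, permVal_directSum_right h α β (hlt i), permVal_directSum_right h α β (hlt j),
    Nat.add_lt_add_iff_left]

/-- `hσ` says that `σ` is not a direct sum of two nonempty patterns, phrased through the
initial segment `P` of entries that an occurrence places inside `α`. -/
lemma containsPat_directSum_iff {k : ℕ} (σ : Fin k → ℕ)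
    (hσ : ∀ P : Fin k → Bool, (∀ i j, i ≤ j → P j = true → P i = true) →
      (∀ i j, P i = true → P j = false → σ i < σ j) →
      (∀ i, P i = true) ∨ ∀ i, P i = false) :
    ContainsPat (directSum h α β) σ ↔ ContainsPat α σ ∨ ContainsPat β σ := by
  refine ⟨fun hc => ?_, fun hc => hc.elim (containsPat_directSum_of_left h α β)
    (containsPat_directSum_of_right h α β)⟩
  obtain ⟨g, hlt, hmono, hpat⟩ := (containsPat_iff_permVal _ σ).mp hc
  have hleft : ∀ i, g i < a → permVal (directSum h α β) (g i) = permVal α (g i) :=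
    fun i hi => permVal_directSum_left h α β hi
  have hright : ∀ i, a ≤ g i → permVal (directSum h α β) (g i) = a + permVal β (g i - a) :=
    fun i hi => by
      rw [← permVal_directSum_right h α β (by have := hlt i; omega), Nat.add_sub_cancel' hi]
  rcases hσ (fun i => decide (g i < a))
      (fun i j hij hj => by
        simp only [decide_eq_true_eq] at hj ⊢
        exact (hmono.monotone hij).trans_lt hj)
      (fun i j hi hj => by
        simp only [decide_eq_true_eq, decide_eq_false_iff_not, not_lt] at hi hj
        rw [hpat, hleft i hi, hright j hj]
        have := permVal_lt α hi
        omega) with hall | hall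
  · simp only [decide_eq_true_eq] at hall
    refine Or.inl ((containsPat_iff_permVal α σ).mpr ⟨g, hall, hmono, fun i j => ?_⟩)
    rw [hpat, hleft i (hall i), hleft j (hall j)]
  · simp only [decide_eq_false_iff_not, not_lt] at hall
    refine Or.inr ((containsPat_iff_permVal β σ).mpr ⟨fun i => g i - a,
      fun i => show g i - a < b by have := hlt i; have := hall i; omega,
      fun i j hij => by have := hmono hij; have := hall i; dsimp only; omega, fun i j => ?_⟩)
    rw [hpat, hright i (hall i), hright j (hall j), Nat.add_lt_add_iff_left]

lemma sepPerm_directSum_iff : SepPerm (directSum h α β) ↔ SepPerm α ∧ SepPerm β := by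
  rw [SepPerm, SepPerm, SepPerm, containsPat_directSum_iff h α β _ (by decide),
    containsPat_directSum_iff h α β _ (by decide)]
  tauto

end DirectSum

section Sums

open Equiv.Perm

lemma exists_directSum_of_not_sumIndecomposable {n : ℕ} {π : Equiv.Perm (Fin n)}
    (hπ : ¬ SumIndecomposable π) :
    ∃ j, 0 < j ∧ j < n ∧ ∃ (h : j + (n - j) = n) (α : Equiv.Perm (Fin j))
      (β : Equiv.Perm (Fin (n - j))), SumIndecomposable α ∧ π = directSum h α β := by
  classical
  have hex : ∃ k, 0 < k ∧ k < n ∧ IsSumCut π n k := by simpa [SumIndecomposable] using hπ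
  obtain ⟨hj, hjn, hcut⟩ := Nat.find_spec hex
  have h : Nat.find hex + (n - Nat.find hex) = n := by omega
  obtain ⟨α, β, hπα⟩ := exists_directSum_of_isSumCut h hcut
  refine ⟨_, hj, hjn, h, α, β, fun k hk hkj hαk => ?_, hπα⟩
  rw [← isSumCut_directSum_iff h α β hkj.le, ← hπα] at hαk
  exact Nat.find_min hex hkj ⟨hk, by omega, hαk⟩

lemma eq_of_directSum_eq {a a' b b' n : ℕ} {h : a + b = n} {h' : a' + b' = n}
    {α : Equiv.Perm (Fin a)} {α' : Equiv.Perm (Fin a')} {β : Equiv.Perm (Fin b)}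
    {β' : Equiv.Perm (Fin b')} (hα : SumIndecomposable α) (hα' : SumIndecomposable α')
    (ha : 0 < a) (ha' : 0 < a') (he : directSum h α β = directSum h' α' β') : a = a' := by
  by_contra hne
  rcases Nat.lt_or_gt_of_ne hne with hlt | hlt
  · have hcut := isSumCut_directSum h α β
    rw [he, isSumCut_directSum_iff h' α' β' hlt.le] at hcut
    exact hα' a ha hlt hcut
  · have hcut := isSumCut_directSum h' α' β'
    rw [← he, isSumCut_directSum_iff h α β hlt.le] at hcut
    exact hα a' ha' hlt hcut

variable {R : Type*} [CommSemiring R]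

open scoped Classical

noncomputable def sepSum (w : ∀ n, Equiv.Perm (Fin n) → R) (n : ℕ) : R :=
  ∑ π ∈ univ.filter (fun π : Equiv.Perm (Fin n) => SepPerm π), w n π

noncomputable def indecSepSum (w : ∀ n, Equiv.Perm (Fin n) → R) (n : ℕ) : R :=
  ∑ π ∈ univ.filter (fun π : Equiv.Perm (Fin n) => SepPerm π ∧ SumIndecomposable π),
    w n π

lemma indecSepSum_one {w : ∀ n, Equiv.Perm (Fin n) → R} (hw : ∀ π, w 1 π = 1) :
    indecSepSum w 1 = 1 := by
  rw [indecSepSum, sum_congr rfl fun π _ => hw π, sum_const, filter_true_of_mem fun π _ =>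
    ⟨sepPerm_of_lt_four π (by norm_num), fun k hk hk1 => absurd hk1 (by omega)⟩]
  simp

lemma sepSum_eq_indecSepSum_add_sum (w : ∀ n, Equiv.Perm (Fin n) → R) (n : ℕ) :
    sepSum w n = indecSepSum w n + ∑ π ∈ univ.filter (fun π : Equiv.Perm (Fin n) =>
      SepPerm π ∧ ¬ SumIndecomposable π), w n π := by
  rw [sepSum, indecSepSum, ← sum_filter_add_sum_filter_not _ SumIndecomposable, filter_filter,
    filter_filter]

variable (w : ∀ n, Equiv.Perm (Fin n) → R) (c : R)
  (hw : ∀ {a b n : ℕ} (h : a + b = n) (α : Equiv.Perm (Fin a)) (β : Equiv.Perm (Fin b)),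
    0 < a → 0 < b → w n (directSum h α β) = c * (w a α * w b β))
include hw

/-- Sum over the decomposable separable permutations via their unique first-block
decomposition `π = α ⊕ β` with `α` sum-indecomposable. -/
lemma sum_sepPerm_not_sumIndecomposable (n : ℕ) :
    ∑ π ∈ univ.filter (fun π : Equiv.Perm (Fin n) => SepPerm π ∧ ¬ SumIndecomposable π),
      w n π
      = c * ∑ j ∈ Icc 1 (n - 1), indecSepSum w j * sepSum w (n - j) := by
  have hsigma : c * ∑ j ∈ Icc 1 (n - 1), indecSepSum w j * sepSum w (n - j) =
      ∑ x ∈ (Icc 1 (n - 1)).sigma fun j =>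
        univ.filter (fun α : Equiv.Perm (Fin j) => SepPerm α ∧ SumIndecomposable α) ×ˢ
          univ.filter (fun β : Equiv.Perm (Fin (n - j)) => SepPerm β),
        c * (w _ x.2.1 * w _ x.2.2) := by
    rw [sum_sigma, mul_sum]
    refine sum_congr rfl fun j _ => ?_
    rw [sum_product, indecSepSum, sepSum, sum_mul_sum, mul_sum]
    exact sum_congr rfl fun _ _ => mul_sum _ _ _
  rw [hsigma]
  symm
  refine sum_bij (fun x hx => directSum (n := n) (a := x.1) (b := n - x.1)
      (by simp only [mem_sigma, mem_Icc] at hx; omega) x.2.1 x.2.2) ?_ ?_ ?_ ?_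
  · rintro ⟨j, α, β⟩ hx
    simp only [mem_sigma, mem_Icc, mem_product, mem_filter, mem_univ, true_and] at hx ⊢
    refine ⟨(sepPerm_directSum_iff _ α β).mpr ⟨hx.2.1.1, hx.2.2⟩, fun hind => ?_⟩
    exact hind j (by omega) (by omega) (isSumCut_directSum _ α β)
  · rintro ⟨j, α, β⟩ hx ⟨j', α', β'⟩ hx' he
    simp only [mem_sigma, mem_Icc, mem_product, mem_filter, mem_univ, true_and] at hx hx'
    obtain rfl := eq_of_directSum_eq hx.2.1.2 hx'.2.1.2 (by omega) (by omega) he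
    obtain ⟨rfl, rfl⟩ := directSum_inj _ α β he
    rfl
  · intro π hπ
    simp only [mem_filter, mem_univ, true_and] at hπ
    obtain ⟨j, hj, hjn, h, α, β, hα, rfl⟩ := exists_directSum_of_not_sumIndecomposable hπ.2
    obtain ⟨hsα, hsβ⟩ := (sepPerm_directSum_iff h α β).mp hπ.1
    refine ⟨⟨j, α, β⟩, ?_, rfl⟩
    simp only [mem_sigma, mem_Icc, mem_product, mem_filter, mem_univ, true_and]
    exact ⟨⟨hj, by omega⟩, ⟨hsα, hα⟩, hsβ⟩
  · rintro ⟨j, α, β⟩ hx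
    simp only [mem_sigma, mem_Icc] at hx
    exact (hw _ α β hx.1.1 (by omega)).symm

lemma sepSum_eq_indecSepSum_add (n : ℕ) :
    sepSum w n =
      indecSepSum w n + c * ∑ j ∈ Icc 1 (n - 1), indecSepSum w j * sepSum w (n - j) := by
  rw [sepSum_eq_indecSepSum_add_sum, sum_sepPerm_not_sumIndecomposable w c hw]

end Sums

section DescentPolynomials

open Equiv.Perm

lemma desNum_complement_directSum {a b n : ℕ} (h : a + b = n) (α : Equiv.Perm (Fin a))
    (β : Equiv.Perm (Fin b)) (ha : 0 < a) (hb : 0 < b) :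
    desNum (directSum h α β).complement = desNum α.complement + desNum β.complement + 1 := by
  have := desNum_complement_add_desNum (directSum h α β)
  have := desNum_complement_add_desNum α
  have := desNum_complement_add_desNum β
  rw [desNum_directSum h α β ha hb] at *
  omega

noncomputable def desWeight (n : ℕ) (π : Equiv.Perm (Fin n)) : ℤ[X] := X ^ desNum π

/-- `desNum π.complement` is the number of ascents of `π`. -/
noncomputable def ascWeight (n : ℕ) (π : Equiv.Perm (Fin n)) : ℤ[X] := X ^ desNum π.complement

lemma desWeight_directSum {a b n : ℕ} (h : a + b = n) (α : Equiv.Perm (Fin a))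
    (β : Equiv.Perm (Fin b)) (ha : 0 < a) (hb : 0 < b) :
    desWeight n (directSum h α β) = 1 * (desWeight a α * desWeight b β) := by
  rw [desWeight, desNum_directSum h α β ha hb, pow_add, one_mul, desWeight, desWeight]

lemma ascWeight_directSum {a b n : ℕ} (h : a + b = n) (α : Equiv.Perm (Fin a))
    (β : Equiv.Perm (Fin b)) (ha : 0 < a) (hb : 0 < b) :
    ascWeight n (directSum h α β) = X * (ascWeight a α * ascWeight b β) := by
  rw [ascWeight, desNum_complement_directSum h α β ha hb, ascWeight, ascWeight]
  ring

lemma desWeight_one (π : Equiv.Perm (Fin 1)) : desWeight 1 π = 1 := by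
  simp [desWeight, desNum]

lemma ascWeight_one (π : Equiv.Perm (Fin 1)) : ascWeight 1 π = 1 := by
  simp [ascWeight, desNum]

lemma sepSum_desWeight (n : ℕ) : sepSum desWeight n = sepPoly n := rfl

lemma sepPoly_one : sepPoly 1 = 1 := by
  classical
  rw [← sepSum_desWeight, sepSum, sum_congr rfl fun π _ => desWeight_one π, sum_const,
    filter_true_of_mem fun π _ => sepPerm_of_lt_four π (by norm_num)]
  simp

lemma sepSum_ascWeight (n : ℕ) : sepSum ascWeight n = sepPoly n :=
  sum_equiv (complement_involutive.toPerm _) (fun π => by simp [sepPerm_complement_iff])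
    fun _ _ => rfl

lemma indecSepSum_desWeight_add_ascWeight {n : ℕ} (hn : 2 ≤ n) :
    indecSepSum desWeight n + indecSepSum ascWeight n = sepPoly n := by
  classical
  have hskew : indecSepSum ascWeight n =
      ∑ π ∈ univ.filter (fun π : Equiv.Perm (Fin n) =>
        SepPerm π ∧ ¬ SumIndecomposable π), desWeight n π := by
    refine sum_equiv (complement_involutive.toPerm _) (fun π => ?_) fun _ _ => rfl
    simp only [mem_filter, mem_univ, true_and, Function.Involutive.coe_toPerm,
      sepPerm_complement_iff]
    exact and_congr_right fun hsep =>
      ((sumIndecomposable_complement_iff hsep hn).not.trans not_not).symm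
  rw [hskew, ← sepSum_desWeight, sepSum_eq_indecSepSum_add_sum]

end DescentPolynomials

section GeneratingFunction

variable {R : Type*} [CommRing R]

/-- `∑_{n ≥ 1} f n zⁿ`: the term `f 0`, which belongs to the empty permutation, is dropped. -/
noncomputable def genFun (f : ℕ → R) : PowerSeries R :=
  PowerSeries.mk fun n => if n = 0 then 0 else f n

lemma coeff_genFun (f : ℕ → R) (n : ℕ) :
    PowerSeries.coeff n (genFun f) = if n = 0 then 0 else f n :=
  PowerSeries.coeff_mk _ _

lemma constantCoeff_genFun (f : ℕ → R) : PowerSeries.constantCoeff (genFun f) = 0 := by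
  rw [← PowerSeries.coeff_zero_eq_constantCoeff_apply, coeff_genFun, if_pos rfl]

lemma PowerSeries.coeff_mul_eq_sum_Icc {F G : PowerSeries R} (hF : constantCoeff F = 0)
    (hG : constantCoeff G = 0) (n : ℕ) :
    coeff n (F * G) = ∑ j ∈ Icc 1 (n - 1), coeff j F * coeff (n - j) G := by
  rw [coeff_mul, Nat.sum_antidiagonal_eq_sum_range_succ_mk]
  refine (sum_subset (fun j hj => by simp only [mem_Icc, mem_range] at hj ⊢; omega)
    fun j hj hj' => ?_).symm
  simp only [mem_Icc, mem_range] at hj hj'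
  rcases Nat.eq_zero_or_pos j with rfl | hj0
  · rw [coeff_zero_eq_constantCoeff_apply, hF, zero_mul]
  · rw [show n - j = 0 by omega, coeff_zero_eq_constantCoeff_apply, hG, mul_zero]

lemma coeff_genFun_mul_genFun (f g : ℕ → R) (n : ℕ) :
    PowerSeries.coeff n (genFun f * genFun g) = ∑ j ∈ Icc 1 (n - 1), f j * g (n - j) := by
  rw [PowerSeries.coeff_mul_eq_sum_Icc (constantCoeff_genFun f) (constantCoeff_genFun g)]
  refine sum_congr rfl fun j hj => ?_
  rw [mem_Icc] at hj
  rw [coeff_genFun, coeff_genFun, if_neg (by omega), if_neg (by omega)]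

lemma coeff_X_mul_genFun (f : ℕ → R) {n : ℕ} (hn : 2 ≤ n) :
    PowerSeries.coeff n (PowerSeries.X * genFun f) = f (n - 1) := by
  obtain ⟨m, rfl⟩ := Nat.exists_eq_add_of_le' (by omega : 1 ≤ n)
  rw [PowerSeries.coeff_succ_X_mul, coeff_genFun, if_neg (by omega), Nat.add_sub_cancel]

lemma genFun_sepSum {w : ∀ n, Equiv.Perm (Fin n) → R} {c : R}
    (hw : ∀ {a b n : ℕ} (h : a + b = n) (α : Equiv.Perm (Fin a)) (β : Equiv.Perm (Fin b)),
      0 < a → 0 < b → w n (Equiv.Perm.directSum h α β) = c * (w a α * w b β)) :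
    genFun (sepSum w) =
      genFun (indecSepSum w) + PowerSeries.C c * (genFun (indecSepSum w) * genFun (sepSum w)) := by
  ext n
  rw [map_add, PowerSeries.coeff_C_mul, coeff_genFun_mul_genFun, coeff_genFun, coeff_genFun]
  split_ifs with hn
  · simp [hn]
  · exact sepSum_eq_indecSepSum_add w c hw n

/-- Eliminating the two series of indecomposables from `S = A + A S`, `S = B + t B S` and
`A + B = z + S`. -/
lemma genFun_sepPoly :
    genFun sepPoly = PowerSeries.X + PowerSeries.C (1 + X) * (PowerSeries.X * genFun sepPoly)
      + PowerSeries.C X * (genFun sepPoly *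
        (PowerSeries.X * genFun sepPoly + genFun sepPoly * genFun sepPoly)) := by
  have hA := genFun_sepSum desWeight_directSum
  have hB := genFun_sepSum ascWeight_directSum
  have hAB : genFun (indecSepSum desWeight) + genFun (indecSepSum ascWeight) =
      PowerSeries.X + genFun sepPoly := by
    refine PowerSeries.ext fun n => ?_
    rw [map_add, map_add, coeff_genFun, coeff_genFun, coeff_genFun, PowerSeries.coeff_X]
    rcases Nat.lt_or_ge n 2 with hn | hn
    · interval_cases n
      · simp
      · rw [indecSepSum_one desWeight_one, indecSepSum_one ascWeight_one,
          sepPoly_one]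
        norm_num
    · rw [if_neg (by omega), if_neg (by omega), if_neg (by omega), if_neg (by omega), zero_add,
        indecSepSum_desWeight_add_ascWeight hn]
  have hS : sepSum desWeight = sepPoly := funext sepSum_desWeight
  have hS' : sepSum ascWeight = sepPoly := funext sepSum_ascWeight
  rw [hS] at hA
  rw [hS'] at hB
  rw [map_one, one_mul] at hA
  rw [map_add, map_one]
  linear_combination (1 + PowerSeries.C X * genFun sepPoly) * hA + (1 + genFun sepPoly) * hB
    + (1 + genFun sepPoly) * (1 + PowerSeries.C X * genFun sepPoly) * hAB

lemma coeff_genFun_mul_X_mul_add (f : ℕ → R) {n : ℕ} (hn : 2 ≤ n) :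
    PowerSeries.coeff n
        (genFun f * (PowerSeries.X * genFun f + genFun f * genFun f)) =
      ∑ j ∈ Icc 1 (n - 2), f j * (f (n - j - 1)
        + ∑ i ∈ Icc 1 (n - j - 1), f i * f (n - j - i)) := by
  have hT : PowerSeries.constantCoeff (PowerSeries.X * genFun f + genFun f * genFun f) = 0 := by
    simp [constantCoeff_genFun]
  rw [PowerSeries.coeff_mul_eq_sum_Icc (constantCoeff_genFun f) hT,
    show n - 1 = n - 2 + 1 by omega, sum_Icc_succ_top (by omega)]
  have htop : PowerSeries.coeff (n - (n - 2 + 1))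
      (PowerSeries.X * genFun f + genFun f * genFun f) = 0 := by
    rw [show n - (n - 2 + 1) = 0 + 1 by omega, map_add, PowerSeries.coeff_succ_X_mul,
      coeff_genFun_mul_genFun, coeff_genFun]
    simp
  rw [htop, mul_zero, add_zero]
  refine sum_congr rfl fun j hj => ?_
  rw [mem_Icc] at hj
  rw [coeff_genFun, if_neg (by omega), map_add, coeff_X_mul_genFun f (by omega),
    coeff_genFun_mul_genFun, Nat.sub_right_comm]

end GeneratingFunction

theorem sepPoly_recurrence :
    sepPoly 1 = 1 ∧
    ∀ n : ℕ, 2 ≤ n →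
      sepPoly n = (1 + X) * sepPoly (n - 1)
        + X * ∑ j ∈ Finset.Icc 1 (n - 2), sepPoly j *
            (sepPoly (n - j - 1)
              + ∑ i ∈ Finset.Icc 1 (n - j - 1), sepPoly i * sepPoly (n - j - i)) := by
  refine ⟨sepPoly_one, fun n hn => ?_⟩
  have h := congrArg (PowerSeries.coeff n) genFun_sepPoly
  rwa [map_add, map_add, PowerSeries.coeff_X, if_neg (by omega), zero_add,
    PowerSeries.coeff_C_mul, PowerSeries.coeff_C_mul, coeff_X_mul_genFun _ hn,
    coeff_genFun_mul_X_mul_add _ hn, coeff_genFun, if_neg (by omega)] at h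
end
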